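/- Let E* be a smooth symmetric 3×3-tensor field on an open set U ⊂ ℝ³, fix x₀ ∈ ℝ³, define the Frank tensor ∂̄_m ω*_k := ε_{kpq} ∂_p E*_{qm}, the Burgers tensor ∂̄_l b*_k := E*_{kl} + ε_{kpq}(x_p − x₀_p) ∂̄_l ω*_q, and the incompatibility η*_{kl} := ε_{kpm} ε_{lqn} ∂_p ∂_q E*_{mn}. Then ε_{ilj} ∂_l (∂̄_j b*_k) = ε_{kpq}(x_p − x₀_p) η*_{iq}. -/

import Mathlib

noncomputable def pd (i : Fin 3) (f : (Fin 3 → ℝ) → ℝ) : (Fin 3 → ℝ) → ℝ :=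
  fun x => fderiv ℝ f x (Pi.single i 1)

noncomputable def lc (i j k : Fin 3) : ℝ :=
  (((j : ℕ) : ℝ) - ((i : ℕ) : ℝ)) * (((k : ℕ) : ℝ) - ((i : ℕ) : ℝ)) *
    (((k : ℕ) : ℝ) - ((j : ℕ) : ℝ)) / 2

/-- Frank tensor `∂̄_m ω_k = ε_{kpq} ∂_p E_{qm}`. -/
noncomputable def frank (E : Fin 3 → Fin 3 → (Fin 3 → ℝ) → ℝ) (m k : Fin 3) :
    (Fin 3 → ℝ) → ℝ :=
  fun x => ∑ p : Fin 3, ∑ q : Fin 3, lc k p q * pd p (E q m) x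

/-- Burgers tensor `∂̄_l b_k = E_{kl} + ε_{kpq}(x_p - x₀_p) ∂̄_l ω_q`. -/
noncomputable def burgers (E : Fin 3 → Fin 3 → (Fin 3 → ℝ) → ℝ) (x₀ : Fin 3 → ℝ)
    (l k : Fin 3) : (Fin 3 → ℝ) → ℝ :=
  fun x => E k l x + ∑ p : Fin 3, ∑ q : Fin 3, lc k p q * (x p - x₀ p) * frank E l q x

/-- Incompatibility tensor `η_{kl} = ε_{kpm} ε_{lqn} ∂_p ∂_q E_{mn}`. -/
noncomputable def incomp (E : Fin 3 → Fin 3 → (Fin 3 → ℝ) → ℝ) (k l : Fin 3) :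
    (Fin 3 → ℝ) → ℝ :=
  fun x => ∑ p : Fin 3, ∑ m : Fin 3, ∑ q : Fin 3, ∑ n : Fin 3,
    lc k p m * lc l q n * pd p (pd q (E m n)) x

lemma lc_pd_contDiffOn {f : (Fin 3 → ℝ) → ℝ} {U : Set (Fin 3 → ℝ)} (hU : IsOpen U)
    (hf : ContDiffOn ℝ (⊤ : ℕ∞) f U) (p : Fin 3) : ContDiffOn ℝ (⊤ : ℕ∞) (pd p f) U := by
  have h := hf.fderiv_of_isOpen (m := (⊤ : ℕ∞)) hU (by simp)
  exact h.clm_apply contDiffOn_const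

lemma lc_pd_swap {f : (Fin 3 → ℝ) → ℝ} {U : Set (Fin 3 → ℝ)} (hU : IsOpen U)
    (hf : ContDiffOn ℝ (⊤ : ℕ∞) f U) {x : Fin 3 → ℝ} (hx : x ∈ U) (a b : Fin 3) :
    pd a (pd b f) x = pd b (pd a f) x := by
  have hct : ContDiffAt ℝ (⊤ : ℕ∞) f x := hf.contDiffAt (hU.mem_nhds hx)
  have hsymm := hct.isSymmSndFDerivAt (by norm_num; exact WithTop.coe_le_coe.mpr le_top)
  have hdf : DifferentiableAt ℝ (fderiv ℝ f) x := by
    have := hct.fderiv_right (m := (⊤ : ℕ∞)) (by simp)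
    exact this.differentiableAt (by simp)
  have key : ∀ v w : Fin 3 → ℝ, fderiv ℝ (fun y => fderiv ℝ f y v) x w
      = fderiv ℝ (fderiv ℝ f) x w v := by
    intro v w
    rw [fderiv_clm_apply hdf (differentiableAt_const v)]
    simp
  show fderiv ℝ (fun y => fderiv ℝ f y (Pi.single b 1)) x (Pi.single a 1)
      = fderiv ℝ (fun y => fderiv ℝ f y (Pi.single a 1)) x (Pi.single b 1)
  rw [key, key]
  exact hsymm _ _

lemma lc_pd_sum9 {x : Fin 3 → ℝ} (c : Fin 3 → Fin 3 → ℝ)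
    (g : Fin 3 → Fin 3 → (Fin 3 → ℝ) → ℝ)
    (hg : ∀ p q, DifferentiableAt ℝ (g p q) x) (l : Fin 3) :
    pd l (fun y => ∑ p : Fin 3, ∑ q : Fin 3, c p q * g p q y) x
      = ∑ p : Fin 3, ∑ q : Fin 3, c p q * pd l (g p q) x := by
  unfold pd
  rw [fderiv_fun_sum (fun p _ => DifferentiableAt.fun_sum fun q _ => (hg p q).const_mul _)]
  rw [ContinuousLinearMap.sum_apply]
  refine Finset.sum_congr rfl fun p _ => ?_
  rw [fderiv_fun_sum (fun q _ => (hg p q).const_mul _), ContinuousLinearMap.sum_apply]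
  refine Finset.sum_congr rfl fun q _ => ?_
  rw [fderiv_const_mul (hg p q)]
  simp

lemma lc_pd_coord_mul {x : Fin 3 → ℝ} (a : ℝ) (p l : Fin 3) {f : (Fin 3 → ℝ) → ℝ}
    (hf : DifferentiableAt ℝ f x) :
    pd l (fun y => (y p - a) * f y) x
      = (if p = l then 1 else 0) * f x + (x p - a) * pd l f x := by
  unfold pd
  have hc : HasFDerivAt (fun y : Fin 3 → ℝ => y p - a)
      (ContinuousLinearMap.proj p : (Fin 3 → ℝ) →L[ℝ] ℝ) x :=
    ((ContinuousLinearMap.proj p : (Fin 3 → ℝ) →L[ℝ] ℝ).hasFDerivAt).sub_const a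
  rw [HasFDerivAt.fderiv (f := fun y => (y p - a) * f y) (hc.mul hf.hasFDerivAt)]
  simp [Pi.single_apply]
  ring

lemma lc_pd_add {f g : (Fin 3 → ℝ) → ℝ} {x : Fin 3 → ℝ} (hf : DifferentiableAt ℝ f x)
    (hg : DifferentiableAt ℝ g x) (l : Fin 3) :
    pd l (fun y => f y + g y) x = pd l f x + pd l g x := by
  simp [pd, fderiv_fun_add hf hg]

lemma lc000 : lc 0 0 0 = 0 := by norm_num [lc]
lemma lc001 : lc 0 0 1 = 0 := by norm_num [lc]
lemma lc002 : lc 0 0 2 = 0 := by norm_num [lc]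
lemma lc010 : lc 0 1 0 = 0 := by norm_num [lc]
lemma lc011 : lc 0 1 1 = 0 := by norm_num [lc]
lemma lc012 : lc 0 1 2 = 1 := by norm_num [lc]
lemma lc020 : lc 0 2 0 = 0 := by norm_num [lc]
lemma lc021 : lc 0 2 1 = -1 := by norm_num [lc]
lemma lc022 : lc 0 2 2 = 0 := by norm_num [lc]
lemma lc100 : lc 1 0 0 = 0 := by norm_num [lc]
lemma lc101 : lc 1 0 1 = 0 := by norm_num [lc]
lemma lc102 : lc 1 0 2 = -1 := by norm_num [lc]
lemma lc110 : lc 1 1 0 = 0 := by norm_num [lc]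
lemma lc111 : lc 1 1 1 = 0 := by norm_num [lc]
lemma lc112 : lc 1 1 2 = 0 := by norm_num [lc]
lemma lc120 : lc 1 2 0 = 1 := by norm_num [lc]
lemma lc121 : lc 1 2 1 = 0 := by norm_num [lc]
lemma lc122 : lc 1 2 2 = 0 := by norm_num [lc]
lemma lc200 : lc 2 0 0 = 0 := by norm_num [lc]
lemma lc201 : lc 2 0 1 = 1 := by norm_num [lc]
lemma lc202 : lc 2 0 2 = 0 := by norm_num [lc]
lemma lc210 : lc 2 1 0 = -1 := by norm_num [lc]
lemma lc211 : lc 2 1 1 = 0 := by norm_num [lc]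
lemma lc212 : lc 2 1 2 = 0 := by norm_num [lc]
lemma lc220 : lc 2 2 0 = 0 := by norm_num [lc]
lemma lc221 : lc 2 2 1 = 0 := by norm_num [lc]
lemma lc222 : lc 2 2 2 = 0 := by norm_num [lc]

set_option maxHeartbeats 2000000 in
lemma lc_alg (f1 : Fin 3 → Fin 3 → Fin 3 → ℝ) (f2 : Fin 3 → Fin 3 → Fin 3 → Fin 3 → ℝ)
    (X : Fin 3 → ℝ)
    (h1 : ∀ a c d, f1 a c d = f1 a d c)
    (h2a : ∀ a b c d, f2 a b c d = f2 b a c d)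
    (h2b : ∀ a b c d, f2 a b c d = f2 a b d c)
    (i k : Fin 3) :
    ∑ l : Fin 3, ∑ j : Fin 3, lc i l j * (f1 l k j + ∑ p : Fin 3, ∑ q : Fin 3, lc k p q *
        ((if p = l then 1 else 0) * (∑ p' : Fin 3, ∑ q' : Fin 3, lc q p' q' * f1 p' q' j)
          + X p * ∑ p' : Fin 3, ∑ q' : Fin 3, lc q p' q' * f2 l p' q' j))
      = ∑ p : Fin 3, ∑ q : Fin 3, lc k p q * X p *
          (∑ p' : Fin 3, ∑ m : Fin 3, ∑ q' : Fin 3, ∑ n : Fin 3,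
            lc i p' m * lc q q' n * f2 p' q' m n) := by
  have u1 : ∀ a, f1 a 1 0 = f1 a 0 1 := fun a => h1 a 1 0
  have u2 : ∀ a, f1 a 2 0 = f1 a 0 2 := fun a => h1 a 2 0
  have u3 : ∀ a, f1 a 2 1 = f1 a 1 2 := fun a => h1 a 2 1
  have s1 : ∀ c d, f2 1 0 c d = f2 0 1 c d := fun c d => h2a 1 0 c d
  have s2 : ∀ c d, f2 2 0 c d = f2 0 2 c d := fun c d => h2a 2 0 c d
  have s3 : ∀ c d, f2 2 1 c d = f2 1 2 c d := fun c d => h2a 2 1 c d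
  have t1 : ∀ a b, f2 a b 1 0 = f2 a b 0 1 := fun a b => h2b a b 1 0
  have t2 : ∀ a b, f2 a b 2 0 = f2 a b 0 2 := fun a b => h2b a b 2 0
  have t3 : ∀ a b, f2 a b 2 1 = f2 a b 1 2 := fun a b => h2b a b 2 1
  have hcases : ∀ a : Fin 3, a = 0 ∨ a = 1 ∨ a = 2 := by decide
  rcases hcases i with rfl | rfl | rfl <;> rcases hcases k with rfl | rfl | rfl <;>
    · simp only [Fin.sum_univ_three, lc000, lc001, lc002, lc010, lc011, lc012, lc020, lc021,
        lc022, lc100, lc101, lc102, lc110, lc111, lc112, lc120, lc121, lc122, lc200, lc201,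
        lc202, lc210, lc211, lc212, lc220, lc221, lc222, Fin.reduceEq, reduceIte,
        if_true, if_false, mul_zero, zero_mul, mul_one, one_mul, neg_mul, mul_neg, neg_neg,
        add_zero, zero_add, neg_zero]
      simp only [u1, u2, u3, s1, s2, s3, t1, t2, t3]
      ring

/-- The curl of the Burgers tensor: `ε_{ilj} ∂_l ∂̄_j b_k = ε_{kpq}(x_p-x₀_p) η_{iq}`. -/
theorem stmt1 (U : Set (Fin 3 → ℝ)) (hU : IsOpen U)
    (E : Fin 3 → Fin 3 → (Fin 3 → ℝ) → ℝ)
    (hE : ∀ m n, ContDiffOn ℝ (⊤ : ℕ∞) (E m n) U)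
    (hsym : ∀ m n x, E m n x = E n m x) (x₀ : Fin 3 → ℝ) :
    ∀ x ∈ U, ∀ i k : Fin 3,
      (∑ l : Fin 3, ∑ j : Fin 3, lc i l j * pd l (burgers E x₀ j k) x)
        = ∑ p : Fin 3, ∑ q : Fin 3, lc k p q * (x p - x₀ p) * incomp E i q x := by
  intro x hx i k
  have hdE : ∀ m n, DifferentiableAt ℝ (E m n) x := fun m n =>
    ((hE m n).contDiffAt (hU.mem_nhds hx)).differentiableAt (by simp)
  have hdpd : ∀ p m n, DifferentiableAt ℝ (pd p (E m n)) x := fun p m n =>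
    ((lc_pd_contDiffOn hU (hE m n) p).contDiffAt (hU.mem_nhds hx)).differentiableAt (by simp)
  have hdfr : ∀ j q, DifferentiableAt ℝ (frank E j q) x := by
    intro j q
    unfold frank
    exact DifferentiableAt.fun_sum fun p _ =>
      DifferentiableAt.fun_sum fun q' _ => (hdpd p q' j).const_mul _
  have hcoord : ∀ p : Fin 3, DifferentiableAt ℝ (fun y : Fin 3 → ℝ => y p - x₀ p) x :=
    fun p => (ContinuousLinearMap.proj p :
      (Fin 3 → ℝ) →L[ℝ] ℝ).differentiableAt.sub_const (x₀ p)
  have hfr : ∀ l j q, pd l (frank E j q) x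
      = ∑ p' : Fin 3, ∑ q' : Fin 3, lc q p' q' * pd l (pd p' (E q' j)) x := fun l j q =>
    lc_pd_sum9 _ _ (fun p' q' => hdpd p' q' j) l
  have hburg : ∀ l j, pd l (burgers E x₀ j k) x
      = pd l (E k j) x + ∑ p : Fin 3, ∑ q : Fin 3, lc k p q *
          ((if p = l then 1 else 0) * frank E j q x
            + (x p - x₀ p) * pd l (frank E j q) x) := by
    intro l j
    have heq : burgers E x₀ j k = fun y => E k j y +
        ∑ p : Fin 3, ∑ q : Fin 3, lc k p q * ((y p - x₀ p) * frank E j q y) := by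
      funext y
      unfold burgers
      congr 1
      refine Finset.sum_congr rfl fun p _ => Finset.sum_congr rfl fun q _ => ?_
      ring
    rw [heq]
    have hd2 : ∀ p q : Fin 3,
        DifferentiableAt ℝ (fun y : Fin 3 → ℝ => (y p - x₀ p) * frank E j q y) x :=
      fun p q => (hcoord p).mul (hdfr j q)
    rw [lc_pd_add (hdE k j)
      (DifferentiableAt.fun_sum fun p _ => DifferentiableAt.fun_sum fun q _ => (hd2 p q).const_mul _) l]
    congr 1
    rw [lc_pd_sum9 (fun p q => lc k p q)
      (fun p q (y : Fin 3 → ℝ) => (y p - x₀ p) * frank E j q y) hd2 l]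
    refine Finset.sum_congr rfl fun p _ => Finset.sum_congr rfl fun q _ => ?_
    rw [lc_pd_coord_mul (x₀ p) p l (hdfr j q)]
  simp only [hburg, hfr, frank, incomp]
  exact lc_alg (fun a c d => pd a (E c d) x) (fun a b c d => pd a (pd b (E c d)) x)
    (fun p => x p - x₀ p)
    (fun a c d => show pd a (E c d) x = pd a (E d c) x from by
      rw [show E c d = E d c from funext (hsym c d)])
    (fun a b c d => lc_pd_swap hU (hE c d) hx a b)
    (fun a b c d => show pd a (pd b (E c d)) x = pd a (pd b (E d c)) x from by
      rw [show E c d = E d c from funext (hsym c d)]) i k
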